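/- arXiv:2503.19206 — 2 statements merged into one kernel-verified Lean document; each statement's English description precedes it below -/
import Mathlib

section
/- Fix 0 ≤ n ≤ d, an accuracy ε > 0, and assume that for every 1 ≤ i ≤ n one has (λ + 2)·η·(2·max{σ_i, σ^ft_i} + λ + λ√(σ_i)/√(σ^ft_i)) < 1. Let (Ŵ₁(k), Ŵ₂(k))_{k≥0} be generated by iterating the infinite-batch fine-tuning update with anchor θ₀ = W̄₁ⁿ·W̄₂ⁿ, starting from (Ŵ₁(0), Ŵ₂(0)) = (W̄₁ⁿ, W̄₂ⁿ), and write θ̂(k) = Ŵ₁(k)Ŵ₂(k). If K ≥ (1/(η·min_{1≤i≤n} min{σ_i, σ^ft_i}))·log(100Γ/ε), then Uᵀ·θ̂(K)·V is diagonal, its i-th diagonal entry is 0 for i > n, and for every 1 ≤ i ≤ n, |(Uᵀ·θ̂(K)·V)_{ii} − (σ^ft_i + λσ_i)/(1 + λ)| ≤ ε. -/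
open Matrix

open scoped Matrix.Norms.L2Operator

/-- The one-dimensional fine-tuning map `f(x; η, λ, σ, σ₀) = x + 2ηx(σ² − x²) + 2ηλx(σ₀² − x²)`. -/
noncomputable def fstep (η lam s s0 x : ℝ) : ℝ :=
  x + 2 * η * x * (s ^ 2 - x ^ 2) + 2 * η * lam * x * (s0 ^ 2 - x ^ 2)

/-- The diagonal matrix `(Σ_{:n})^{1/2}`: square roots of the first `n` singular values. -/
noncomputable def sqrtTrunc {d : ℕ} (σ : Fin d → ℝ) (n : ℕ) : Matrix (Fin d) (Fin d) ℝ :=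
  Matrix.diagonal fun i => if (i : ℕ) < n then Real.sqrt (σ i) else 0

/-- The ideal stage-`n` checkpoint `W̄₁ⁿ = U (Σ_{:n})^{1/2}`. -/
noncomputable def W1bar {d : ℕ} (U : Matrix (Fin d) (Fin d) ℝ) (σ : Fin d → ℝ) (n : ℕ) :
    Matrix (Fin d) (Fin d) ℝ :=
  U * sqrtTrunc σ n

/-- The ideal stage-`n` checkpoint `W̄₂ⁿ = (Σ_{:n})^{1/2} Vᵀ`. -/
noncomputable def W2bar {d : ℕ} (V : Matrix (Fin d) (Fin d) ℝ) (σ : Fin d → ℝ) (n : ℕ) :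
    Matrix (Fin d) (Fin d) ℝ :=
  sqrtTrunc σ n * Vᵀ

/-- One finite-batch fine-tuning update with covariance `S`, target `A^ft`, anchor `θ₀`,
learning rate `η` and regularization `λ`.  The infinite-batch update is the case `S = 1`. -/
noncomputable def ftStep {d : ℕ} (η lam : ℝ) (Aft θ₀ S : Matrix (Fin d) (Fin d) ℝ)
    (W : Matrix (Fin d) (Fin d) ℝ × Matrix (Fin d) (Fin d) ℝ) :
    Matrix (Fin d) (Fin d) ℝ × Matrix (Fin d) (Fin d) ℝ :=
  (W.1 - (2 * η) • ((W.1 * W.2 - Aft) * S * W.2ᵀ)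
      - (2 * η * lam) • ((W.1 * W.2 - θ₀) * W.2ᵀ),
   W.2 - (2 * η) • (W.1ᵀ * S * (W.1 * W.2 - Aft))
      - (2 * η * lam) • (W.1ᵀ * (W.1 * W.2 - θ₀)))

set_option maxHeartbeats 1000000 in
private lemma stepKey (η lam t s u : ℝ) (hη : 0 < η) (hlam : 0 ≤ lam)
    (ht : 0 < t) (hs : 0 < s)
    (hP1 : 2 * η * (lam + 2) * max t s < 1)
    (hu : |u| ≤ |t - s|)
    (hA : min t s ≤ s + lam * t + u) :
    |1 - 2*η*(s + lam*t + u)*(2 - 2*η*u)| ≤ 1 - 2*η*min t s ∧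
      min t s ≤ s + lam*t + u*(1 - 2*η*(s + lam*t + u)*(2 - 2*η*u)) := by
  have htM : t ≤ max t s := le_max_left _ _
  have hsM : s ≤ max t s := le_max_right _ _
  have hμt : min t s ≤ t := min_le_left _ _
  have hμs : min t s ≤ s := min_le_right _ _
  have hμpos : 0 < min t s := lt_min ht hs
  set M := max t s with hM
  set μ := min t s with hμ
  have h2ημ : 0 < 2*η*μ := by positivity
  have habs : |t - s| = M - μ := by
    rcases le_total t s with h | h
    · rw [abs_of_nonpos (by linarith), hM, hμ, max_eq_right h, min_eq_left h]; ring
    · rw [abs_of_nonneg (by linarith), hM, hμ, max_eq_left h, min_eq_right h]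
  rw [habs] at hu
  have huub : u ≤ M - μ := (abs_le.mp hu).2
  have hulb : μ - M ≤ u := by linarith [(abs_le.mp hu).1]
  set A := s + lam*t + u with hAdef
  have hApos : 0 < A := lt_of_lt_of_le hμpos hA
  have hltM : lam * t ≤ lam * M := mul_le_mul_of_nonneg_left htM hlam
  have hAub : A ≤ (lam+2)*M - μ := by nlinarith
  have h2ηAμ : 2*η*μ ≤ 2*η*A := by
    nlinarith [mul_le_mul_of_nonneg_left hA (by positivity : (0:ℝ) ≤ 2*η)]
  have h2ηAlt : 2*η*A < 1 - 2*η*μ := by nlinarith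
  have huA : u ≤ A := by nlinarith [mul_nonneg hlam ht.le]
  have h2ηu : 2*η*u < 1 := by
    nlinarith [mul_le_mul_of_nonneg_left huA (by positivity : (0:ℝ) ≤ 2*η)]
  set F := 1 - 2*η*A*(2 - 2*η*u) with hF
  have hup : F ≤ 1 - 2*η*μ := by
    have h2 : (2*η*A) * 1 ≤ (2*η*A) * (2 - 2*η*u) :=
      mul_le_mul_of_nonneg_left (by linarith) (by positivity)
    rw [hF]; nlinarith
  have hlow : -(1 - 2*η*μ) ≤ F := by
    rcases le_or_gt 0 u with hu0 | hu0
    · have h1 : 2*η*A*(2 - 2*η*u) ≤ 2*η*A*2 :=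
        mul_le_mul_of_nonneg_left (by nlinarith) (by positivity)
      have h2 : 4*η*A + 2*η*μ < 2 := by nlinarith
      rw [hF]; nlinarith
    · have hident : 2*η*A*(2-2*η*u) = 4*η*(s+lam*t) + 4*η*u*(1-η*A) := by
        rw [hAdef]; ring
      have h0 : 0 ≤ (-u) * (1 - η*A) := mul_nonneg (by linarith) (by nlinarith)
      have h1 : 4*η*u*(1-η*A) ≤ 0 := by nlinarith
      have h2 : s + lam*t ≤ (1+lam)*M := by nlinarith
      have h3 : 4*η*(s+lam*t) + 2*η*μ < 2 := by nlinarith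
      rw [hF]; nlinarith
  refine ⟨abs_le.mpr ⟨hlow, hup⟩, ?_⟩
  rcases le_or_gt 0 (u * F) with h | h
  · nlinarith [mul_nonneg hlam ht.le]
  · rcases le_or_gt u 0 with hu0 | hu0
    · have hFpos : 0 < F := by
        by_contra h'
        push_neg at h'
        nlinarith [mul_nonneg (neg_nonneg.mpr hu0) (neg_nonneg.mpr h')]
      have huF : u ≤ u * F := by
        nlinarith [mul_nonneg (neg_nonneg.mpr hu0) (by nlinarith : (0:ℝ) ≤ 1 - F)]
      linarith [hA]
    · have hFneg : F < 0 := by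
        by_contra h'
        push_neg at h'
        nlinarith [mul_nonneg hu0.le h']
      rcases le_total t s with hts | hst
      · have hμt' : μ = t := min_eq_left hts
        have hMs' : M = s := max_eq_right hts
        have h1 : u * (-F) ≤ (s - t) * 1 :=
          mul_le_mul (by rw [hMs', hμt'] at huub; linarith) (by linarith) (by linarith)
            (by linarith)
        nlinarith
      · have hμs' : μ = s := min_eq_right hst
        have hMt' : M = t := max_eq_left hst
        have hAub2 : A ≤ (1+lam)*t := by
          rw [hMt', hμs'] at huub; rw [hAdef]; nlinarith
        have hnegF : -F ≤ 4*η*A - 1 := by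
          have h' : 2*η*A*(2-2*η*u) ≤ 2*η*A*2 :=
            mul_le_mul_of_nonneg_left (by nlinarith) (by positivity)
          rw [hF]; nlinarith
        have hP1t : 2*η*(lam+2)*t < 1 := by rw [hMt'] at hP1; exact hP1
        have h2 : (lam+2)*A ≤ (lam+2)*((1+lam)*t) :=
          mul_le_mul_of_nonneg_left hAub2 (by linarith)
        have h3 : (lam+2)*(-F) ≤ lam := by
          have ha := mul_le_mul_of_nonneg_left hnegF (by linarith : (0:ℝ) ≤ lam+2)
          have hb := mul_lt_mul_of_pos_left hP1t (by linarith : (0:ℝ) < 2*(1+lam))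
          nlinarith [mul_le_mul_of_nonneg_left h2 (by positivity : (0:ℝ) ≤ 4*η)]
        have h4 : u*(-F) ≤ t*(-F) :=
          mul_le_mul_of_nonneg_right (by rw [hMt', hμs'] at huub; linarith) (by linarith)
        have h5 : t*((lam+2)*(-F)) ≤ t*lam := mul_le_mul_of_nonneg_left h3 ht.le
        have h6 : u*(-F) ≤ (lam+2)*(u*(-F)) := by
          nlinarith [mul_nonneg hlam (mul_nonneg hu0.le (neg_nonneg.mpr hFneg.le))]
        have h7 : (lam+2)*(u*(-F)) ≤ (lam+2)*(t*(-F)) :=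
          mul_le_mul_of_nonneg_left h4 (by linarith)
        nlinarith

private lemma scalarIter (η lam t s : ℝ) (hη : 0 < η) (hlam : 0 ≤ lam)
    (ht : 0 < t) (hs : 0 < s)
    (hP1 : 2 * η * (lam + 2) * max t s < 1)
    (a : ℕ → ℝ) (ha0 : (a 0) ^ 2 = t)
    (hrec : ∀ k, a (k+1) = a k - 2*η*((a k)^2 - s)*(a k) - 2*η*lam*((a k)^2 - t)*(a k)) :
    ∀ K : ℕ, |(1+lam)*(a K)^2 - (s + lam*t)| ≤ (1 - 2*η*min t s)^K * |t - s| := by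
  have hμpos : 0 < min t s := lt_min ht hs
  have hρ0 : 0 ≤ 1 - 2*η*min t s := by
    have h1 : min t s ≤ max t s := min_le_max
    nlinarith [mul_pos hη hμpos, mul_nonneg (mul_nonneg hη.le hlam) (le_trans hμpos.le h1)]
  have hρ1 : 1 - 2*η*min t s ≤ 1 := by nlinarith [mul_pos hη hμpos]
  have main : ∀ K : ℕ,
      |(1+lam)*(a K)^2 - (s + lam*t)| ≤ (1 - 2*η*min t s)^K * |t - s| ∧
      min t s ≤ (1+lam)*(a K)^2 := by
    intro K
    induction K with
    | zero =>
      constructor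
      · rw [ha0, pow_zero, one_mul]
        have : (1+lam)*t - (s + lam*t) = t - s := by ring
        rw [this]
      · rw [ha0]; nlinarith [min_le_left t s, mul_nonneg hlam ht.le]
    | succ k ih =>
      obtain ⟨ih1, ih2⟩ := ih
      set u := (1+lam)*(a k)^2 - (s + lam*t) with hudef
      have hAeq : s + lam*t + u = (1+lam)*(a k)^2 := by rw [hudef]; ring
      have hu : |u| ≤ |t - s| := by
        calc |u| ≤ (1 - 2*η*min t s)^k * |t - s| := ih1
          _ ≤ 1 * |t - s| := by
              apply mul_le_mul_of_nonneg_right (pow_le_one₀ hρ0 hρ1) (abs_nonneg _)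
          _ = |t - s| := one_mul _
      have hA : min t s ≤ s + lam*t + u := by rw [hAeq]; exact ih2
      obtain ⟨key1, key2⟩ := stepKey η lam t s u hη hlam ht hs hP1 hu hA
      have hnext : (1+lam)*(a (k+1))^2 - (s + lam*t)
          = u * (1 - 2*η*(s + lam*t + u)*(2 - 2*η*u)) := by
        rw [hrec k, hudef]; ring
      constructor
      · rw [hnext, abs_mul, pow_succ]
        calc |u| * |1 - 2*η*(s + lam*t + u)*(2 - 2*η*u)|
            ≤ ((1 - 2*η*min t s)^k * |t - s|) * (1 - 2*η*min t s) := by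
              apply mul_le_mul ih1 key1 (abs_nonneg _) (by positivity)
          _ = (1 - 2*η*min t s)^k * (1 - 2*η*min t s) * |t - s| := by ring
      · have : (1+lam)*(a (k+1))^2 = s + lam*t + u * (1 - 2*η*(s + lam*t + u)*(2 - 2*η*u)) := by
          linarith [hnext]
        rw [this]; exact key2
  intro K; exact (main K).1

private noncomputable def updFun {d : ℕ} (η lam : ℝ) (sft t0 : Fin d → ℝ) (v : Fin d → ℝ) :
    Fin d → ℝ :=
  fun i => v i - 2*η*((v i)^2 - sft i)*(v i) - 2*η*lam*((v i)^2 - t0 i)*(v i)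

private lemma ftStep_diag {d : ℕ} (η lam : ℝ) (U V : Matrix (Fin d) (Fin d) ℝ)
    (hU' : Uᵀ * U = 1) (hV' : Vᵀ * V = 1) (sft t0 v : Fin d → ℝ) :
    ftStep η lam (U * Matrix.diagonal sft * Vᵀ) (U * Matrix.diagonal t0 * Vᵀ) 1
      (U * Matrix.diagonal v, Matrix.diagonal v * Vᵀ) =
    (U * Matrix.diagonal (updFun η lam sft t0 v),
     Matrix.diagonal (updFun η lam sft t0 v) * Vᵀ) := by
  have hdiag2 : Matrix.diagonal v * Matrix.diagonal v
      = Matrix.diagonal (fun i => v i * v i) := Matrix.diagonal_mul_diagonal v v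
  have hdiff : ∀ w : Fin d → ℝ,
      (U * Matrix.diagonal v) * (Matrix.diagonal v * Vᵀ) - U * Matrix.diagonal w * Vᵀ
        = U * ((Matrix.diagonal fun i => v i * v i - w i) * Vᵀ) := by
    intro w
    simp only [Matrix.mul_assoc]
    rw [← Matrix.mul_assoc (Matrix.diagonal v), hdiag2, ← Matrix.mul_sub, ← Matrix.sub_mul,
      ← Matrix.diagonal_sub]
  have htrans : (Matrix.diagonal v * Vᵀ)ᵀ = V * Matrix.diagonal v := by
    rw [Matrix.transpose_mul, Matrix.transpose_transpose, Matrix.diagonal_transpose]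
  have htrans1 : (U * Matrix.diagonal v)ᵀ = Matrix.diagonal v * Uᵀ := by
    rw [Matrix.transpose_mul, Matrix.diagonal_transpose]
  have hright : ∀ w : Fin d → ℝ,
      U * ((Matrix.diagonal w) * Vᵀ) * (V * Matrix.diagonal v)
        = U * Matrix.diagonal (fun i => w i * v i) := by
    intro w
    simp only [Matrix.mul_assoc]
    rw [← Matrix.mul_assoc Vᵀ V, hV', Matrix.one_mul, Matrix.diagonal_mul_diagonal]
  have hleft : ∀ w : Fin d → ℝ,
      (Matrix.diagonal v * Uᵀ) * (U * ((Matrix.diagonal w) * Vᵀ))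
        = Matrix.diagonal (fun i => v i * w i) * Vᵀ := by
    intro w
    simp only [Matrix.mul_assoc]
    rw [← Matrix.mul_assoc Uᵀ U, hU', Matrix.one_mul, ← Matrix.mul_assoc,
      Matrix.diagonal_mul_diagonal]
  unfold ftStep
  simp only [Matrix.mul_one]
  refine Prod.ext ?_ ?_
  · show U * Matrix.diagonal v
        - (2*η) • (((U * Matrix.diagonal v) * (Matrix.diagonal v * Vᵀ)
            - U * Matrix.diagonal sft * Vᵀ) * (Matrix.diagonal v * Vᵀ)ᵀ)
        - (2*η*lam) • (((U * Matrix.diagonal v) * (Matrix.diagonal v * Vᵀ)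
            - U * Matrix.diagonal t0 * Vᵀ) * (Matrix.diagonal v * Vᵀ)ᵀ)
      = U * Matrix.diagonal (updFun η lam sft t0 v)
    rw [htrans, hdiff, hdiff, hright, hright, ← Matrix.mul_smul, ← Matrix.mul_smul,
      ← Matrix.mul_sub, ← Matrix.mul_sub]
    congr 1
    rw [← Matrix.diagonal_smul, ← Matrix.diagonal_smul, Matrix.diagonal_sub,
      Matrix.diagonal_sub]
    refine congrArg Matrix.diagonal (funext fun i => ?_)
    simp only [Pi.sub_apply, Pi.smul_apply, smul_eq_mul, updFun]
    ring
  · show Matrix.diagonal v * Vᵀ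
        - (2*η) • ((U * Matrix.diagonal v)ᵀ * ((U * Matrix.diagonal v) * (Matrix.diagonal v * Vᵀ)
            - U * Matrix.diagonal sft * Vᵀ))
        - (2*η*lam) • ((U * Matrix.diagonal v)ᵀ * ((U * Matrix.diagonal v) * (Matrix.diagonal v * Vᵀ)
            - U * Matrix.diagonal t0 * Vᵀ))
      = Matrix.diagonal (updFun η lam sft t0 v) * Vᵀ
    rw [htrans1, hdiff, hdiff, hleft, hleft, ← Matrix.smul_mul, ← Matrix.smul_mul,
      ← Matrix.sub_mul, ← Matrix.sub_mul]
    congr 1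
    rw [← Matrix.diagonal_smul, ← Matrix.diagonal_smul, Matrix.diagonal_sub,
      Matrix.diagonal_sub]
    refine congrArg Matrix.diagonal (funext fun i => ?_)
    simp only [Pi.sub_apply, Pi.smul_apply, smul_eq_mul, updFun]
    ring


set_option maxHeartbeats 1000000 in
/-- after sufficiently many infinite-batch fine-tuning steps from the ideal
stage-`n` checkpoint, `Uᵀ θ̂(K) V` is diagonal, vanishes beyond index `n`, and its first `n`
diagonal entries are `ε`-close to `(σ^ft_i + λσ_i)/(1 + λ)`. -/
theorem infinite_batch_converges_to_interpolation {d : ℕ} (hd : 1 ≤ d)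
    (U V : Matrix (Fin d) (Fin d) ℝ)
    (hU : U * Uᵀ = 1) (hU' : Uᵀ * U = 1) (hV : V * Vᵀ = 1) (hV' : Vᵀ * V = 1)
    (σ : Fin d → ℝ) (hσpos : ∀ i, 0 < σ i) (hσanti : StrictAnti σ)
    (σft : Fin d → ℝ) (hσftpos : ∀ i, 0 < σft i)
    (Aft : Matrix (Fin d) (Fin d) ℝ) (hAft : Aft = U * Matrix.diagonal σft * Vᵀ)
    (Γ : ℝ) (hΓ : Γ = max (σ ⟨0, hd⟩) (Finset.univ.sup' ⟨⟨0, hd⟩, Finset.mem_univ _⟩ σft))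
    (η lam : ℝ) (hη : 0 < η) (hlam : 0 ≤ lam)
    (n : ℕ) (hnd : n ≤ d)
    (ε : ℝ) (hε : 0 < ε)
    (hcond : ∀ i : Fin d, (i : ℕ) < n →
      (lam + 2) * η * (2 * max (σ i) (σft i) + lam
        + lam * Real.sqrt (σ i) / Real.sqrt (σft i)) < 1)
    (θ₀ : Matrix (Fin d) (Fin d) ℝ) (hθ₀ : θ₀ = W1bar U σ n * W2bar V σ n)
    (K : ℕ)
    (hK : (K : ℝ) ≥
      1 / (η * sInf {x : ℝ | ∃ i : Fin d, (i : ℕ) < n ∧ x = min (σ i) (σft i)})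
        * Real.log (100 * Γ / ε)) :
    ∃ D : Fin d → ℝ,
      Uᵀ * (((ftStep η lam Aft θ₀ 1)^[K] (W1bar U σ n, W2bar V σ n)).1 *
            ((ftStep η lam Aft θ₀ 1)^[K] (W1bar U σ n, W2bar V σ n)).2) * V
        = Matrix.diagonal D ∧
      (∀ i : Fin d, n ≤ (i : ℕ) → D i = 0) ∧
      (∀ i : Fin d, (i : ℕ) < n →
        |D i - (σft i + lam * σ i) / (1 + lam)| ≤ ε) := by
  classical
  set t0 : Fin d → ℝ := fun i => if (i : ℕ) < n then σ i else 0 with ht0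
  set v0 : Fin d → ℝ := fun i => if (i : ℕ) < n then Real.sqrt (σ i) else 0 with hv0
  have hW1 : W1bar U σ n = U * Matrix.diagonal v0 := rfl
  have hW2 : W2bar V σ n = Matrix.diagonal v0 * Vᵀ := rfl
  have hθ₀' : θ₀ = U * Matrix.diagonal t0 * Vᵀ := by
    rw [hθ₀, hW1, hW2, ← Matrix.mul_assoc, Matrix.mul_assoc U,
      Matrix.diagonal_mul_diagonal]
    congr 2
    refine congrArg Matrix.diagonal (funext fun i => ?_)
    rw [hv0, ht0]
    by_cases h : (i : ℕ) < n
    · simp only [if_pos h]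
      exact Real.mul_self_sqrt (hσpos i).le
    · simp only [if_neg h, mul_zero]
  set g := updFun η lam σft t0 with hg
  have hiter : ∀ k : ℕ, (ftStep η lam Aft θ₀ 1)^[k] (W1bar U σ n, W2bar V σ n)
      = (U * Matrix.diagonal (g^[k] v0), Matrix.diagonal (g^[k] v0) * Vᵀ) := by
    intro k
    induction k with
    | zero => simp [hW1, hW2]
    | succ k ih =>
      rw [Function.iterate_succ_apply', ih, hAft, hθ₀', Function.iterate_succ_apply', hg]
      exact ftStep_diag η lam U V hU' hV' σft t0 (g^[k] v0)
  have hzero : ∀ (k : ℕ) (i : Fin d), n ≤ (i : ℕ) → g^[k] v0 i = 0 := by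
    intro k
    induction k with
    | zero =>
      intro i hi
      simp [hv0, Nat.not_lt.mpr hi]
    | succ k ih =>
      intro i hi
      rw [Function.iterate_succ_apply', hg]
      show updFun η lam σft t0 (g^[k] v0) i = 0
      rw [updFun]
      simp [ih i hi]
  refine ⟨fun i => (g^[K] v0 i)^2, ?_, ?_, ?_⟩
  · rw [hiter K]
    show Uᵀ * (U * Matrix.diagonal (g^[K] v0) * (Matrix.diagonal (g^[K] v0) * Vᵀ)) * V
      = Matrix.diagonal fun i => (g^[K] v0 i)^2
    rw [Matrix.mul_assoc U, ← Matrix.mul_assoc (Matrix.diagonal (g^[K] v0)),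
      Matrix.diagonal_mul_diagonal, ← Matrix.mul_assoc Uᵀ, hU',
      Matrix.one_mul, Matrix.mul_assoc, hV', Matrix.mul_one]
    exact congrArg Matrix.diagonal (funext fun i => (sq (g^[K] v0 i)).symm)
  · intro i hi
    show (g^[K] v0 i)^2 = 0
    rw [hzero K i hi]
    ring
  · intro i hi
    have hμsne : ({x : ℝ | ∃ i : Fin d, (i : ℕ) < n ∧ x = min (σ i) (σft i)}).Nonempty :=
      ⟨min (σ i) (σft i), i, hi, rfl⟩
    have hμsbdd : BddBelow {x : ℝ | ∃ i : Fin d, (i : ℕ) < n ∧ x = min (σ i) (σft i)} := by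
      refine ⟨0, fun x hx => ?_⟩
      obtain ⟨j, _, rfl⟩ := hx
      exact le_of_lt (lt_min (hσpos j) (hσftpos j))
    set μs := sInf {x : ℝ | ∃ i : Fin d, (i : ℕ) < n ∧ x = min (σ i) (σft i)} with hμs
    have hμsle : μs ≤ min (σ i) (σft i) := csInf_le hμsbdd ⟨i, hi, rfl⟩
    have hμspos : 0 < μs := by
      have hb : ∀ x ∈ {x : ℝ | ∃ i : Fin d, (i : ℕ) < n ∧ x = min (σ i) (σft i)},
          Finset.univ.inf' ⟨i, Finset.mem_univ i⟩ (fun j => min (σ j) (σft j)) ≤ x := by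
        intro x hx
        obtain ⟨j, _, rfl⟩ := hx
        exact Finset.inf'_le _ (Finset.mem_univ j)
      have h1 : Finset.univ.inf' ⟨i, Finset.mem_univ i⟩ (fun j => min (σ j) (σft j)) ≤ μs :=
        le_csInf hμsne hb
      have h2 : 0 < Finset.univ.inf' ⟨i, Finset.mem_univ i⟩ (fun j => min (σ j) (σft j)) := by
        refine (Finset.lt_inf'_iff _).2 ?_
        intro j _
        exact lt_min (hσpos j) (hσftpos j)
      linarith
    have hle0 : (⟨0, hd⟩ : Fin d) ≤ i := by simp [Fin.le_def]
    have hΓσ : σ i ≤ Γ := by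
      rw [hΓ]; exact le_trans (hσanti.antitone hle0) (le_max_left _ _)
    have hΓσft : σft i ≤ Γ := by
      rw [hΓ]; exact le_trans (Finset.le_sup' σft (Finset.mem_univ i)) (le_max_right _ _)
    have hΓpos : 0 < Γ := lt_of_lt_of_le (hσpos i) hΓσ
    have hP1 : 2 * η * (lam + 2) * max (σ i) (σft i) < 1 := by
      have h := hcond i hi
      have hnn : 0 ≤ lam * Real.sqrt (σ i) / Real.sqrt (σft i) := by positivity
      nlinarith [mul_nonneg (mul_nonneg (by linarith : (0:ℝ) ≤ lam+2) hη.le) hnn,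
        mul_nonneg (mul_nonneg (by linarith : (0:ℝ) ≤ lam+2) hη.le) hlam]
    set a : ℕ → ℝ := fun k => g^[k] v0 i with ha
    have ha0 : (a 0)^2 = σ i := by
      show (v0 i)^2 = σ i
      rw [hv0]
      simp only [if_pos hi]
      exact Real.sq_sqrt (hσpos i).le
    have hrec : ∀ k, a (k+1)
        = a k - 2*η*((a k)^2 - σft i)*(a k) - 2*η*lam*((a k)^2 - σ i)*(a k) := by
      intro k
      show g^[k+1] v0 i = _
      rw [Function.iterate_succ_apply', hg]
      show updFun η lam σft t0 (g^[k] v0) i = _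
      rw [updFun, ht0]
      simp only [if_pos hi]
      rfl
    have hbound := scalarIter η lam (σ i) (σft i) hη hlam (hσpos i) (hσftpos i) hP1 a ha0 hrec K
    have hminpos : 0 < min (σ i) (σft i) := lt_min (hσpos i) (hσftpos i)
    have hρ0 : 0 ≤ 1 - 2*η*min (σ i) (σft i) := by
      have h1 : min (σ i) (σft i) ≤ max (σ i) (σft i) := min_le_max
      nlinarith [mul_pos hη hminpos,
        mul_nonneg (mul_nonneg hη.le hlam) (le_trans hminpos.le h1)]
    have hexp1 : 1 - 2*η*min (σ i) (σft i) ≤ Real.exp (-(2*η*min (σ i) (σft i))) := by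
      have := Real.add_one_le_exp (-(2*η*min (σ i) (σft i)))
      linarith
    have hρK : (1 - 2*η*min (σ i) (σft i))^K ≤ Real.exp (-(η*μs*(K:ℝ))) := by
      calc (1 - 2*η*min (σ i) (σft i))^K
          ≤ (Real.exp (-(2*η*min (σ i) (σft i))))^K := pow_le_pow_left₀ hρ0 hexp1 K
        _ = Real.exp ((K : ℝ) * (-(2*η*min (σ i) (σft i)))) := (Real.exp_nat_mul _ K).symm
        _ ≤ Real.exp (-(η*μs*(K:ℝ))) := by
            apply Real.exp_le_exp.mpr
            have hK0 : (0:ℝ) ≤ (K:ℝ) := Nat.cast_nonneg K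
            nlinarith [mul_nonneg (mul_nonneg hη.le
              (by linarith : (0:ℝ) ≤ 2*min (σ i) (σft i) - μs)) hK0]
    have hKlog : Real.log (100*Γ/ε) ≤ η*μs*(K:ℝ) := by
      have h1 : 1/(η*μs) * Real.log (100*Γ/ε) ≤ (K:ℝ) := hK
      have h2 := mul_le_mul_of_nonneg_left h1 (le_of_lt (mul_pos hη hμspos))
      have h3 : η*μs*(1/(η*μs) * Real.log (100*Γ/ε)) = Real.log (100*Γ/ε) := by
        field_simp
      rwa [h3] at h2
    have hexp2 : Real.exp (-(η*μs*(K:ℝ))) ≤ ε/(100*Γ) := by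
      have h1 : Real.exp (-(η*μs*(K:ℝ))) ≤ Real.exp (-(Real.log (100*Γ/ε))) :=
        Real.exp_le_exp.mpr (by linarith)
      have h2 : Real.exp (-(Real.log (100*Γ/ε))) = ε/(100*Γ) := by
        rw [Real.exp_neg, Real.exp_log (by positivity), inv_div]
      linarith
    have habsΓ : |σ i - σft i| ≤ Γ := by
      rcases le_total (σ i) (σft i) with h | h
      · rw [abs_of_nonpos (by linarith)]; linarith [hσpos i]
      · rw [abs_of_nonneg (by linarith)]; linarith [hσftpos i]
    have hΓne : Γ ≠ 0 := ne_of_gt hΓpos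
    have hmain : |(1+lam)*(a K)^2 - (σft i + lam*σ i)| ≤ ε/100 := by
      calc |(1+lam)*(a K)^2 - (σft i + lam*σ i)|
          ≤ (1 - 2*η*min (σ i) (σft i))^K * |σ i - σft i| := hbound
        _ ≤ (ε/(100*Γ)) * Γ := by
            apply mul_le_mul (le_trans hρK hexp2) habsΓ (abs_nonneg _) (by positivity)
        _ = ε/100 := by field_simp
    have h1lam : (0:ℝ) < 1 + lam := by linarith
    have hDi : (fun i => (g^[K] v0 i)^2) i - (σft i + lam*σ i)/(1+lam)
        = ((1+lam)*(a K)^2 - (σft i + lam*σ i))/(1+lam) := by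
      show (a K)^2 - (σft i + lam*σ i)/(1+lam) = _
      field_simp
    rw [show (σft i + lam * σ i) / (1 + lam) = (σft i + lam*σ i)/(1+lam) by ring, hDi,
      abs_div, abs_of_pos h1lam]
    calc |(1+lam)*(a K)^2 - (σft i + lam*σ i)|/(1+lam)
        ≤ |(1+lam)*(a K)^2 - (σft i + lam*σ i)| := div_le_self (abs_nonneg _) (by linarith)
      _ ≤ ε/100 := hmain
      _ ≤ ε := by linarith
end

section
/- Fix λ₀ ≥ λ ≥ 0 and assume σ^ft_i ≠ σ_i for every 1 ≤ i ≤ d. Let m = min_{1≤i≤d}(σ_i − σ^ft_i)²/(λ₀ + 1)². Suppose that for each n ∈ {0, 1, …, d} matrices θⁿ_init, θⁿ_fin ∈ ℝ^{d×d} satisfy |L_pre(θⁿ_init) − L_pre(U·Σ_{:n}·Vᵀ)| ≤ m/10 and |L_pre(θⁿ_fin) − L_pre(U·M_n^λ·Vᵀ)| ≤ m/5, and define Δ_n = L_pre(θⁿ_fin) − L_pre(θⁿ_init). Then for every 1 ≤ n ≤ d, Δ_n − Δ_{n−1} ≥ (σ_n − σ^ft_n)²/(1 + λ)² − (3/5)·m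 > 0; in particular the sensitivity Δ_n is strictly increasing in n (progressive sensitivity). -/
open Matrix

/-- Squared Frobenius norm of a real matrix. -/
noncomputable def frobSq {d : ℕ} (M : Matrix (Fin d) (Fin d) ℝ) : ℝ :=
  ∑ i, ∑ j, (M i j) ^ 2

/-- The truncated diagonal matrix keeping the first `n` diagonal entries of `diagonal σ`. -/
noncomputable def truncDiag {d : ℕ} (σ : Fin d → ℝ) (n : ℕ) : Matrix (Fin d) (Fin d) ℝ :=
  Matrix.diagonal fun i => if (i : ℕ) < n then σ i else 0

/-- The diagonal matrix `M_n^λ` with entries `(σ^ft_i + λσ_i)/(1 + λ)` for `i ≤ n`, `0` else. -/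
noncomputable def Mreg {d : ℕ} (σ σft : Fin d → ℝ) (lam : ℝ) (n : ℕ) :
    Matrix (Fin d) (Fin d) ℝ :=
  Matrix.diagonal fun i => if (i : ℕ) < n then (σft i + lam * σ i) / (1 + lam) else 0


lemma frobSq_def' {d : ℕ} (M : Matrix (Fin d) (Fin d) ℝ) :
    frobSq M = Matrix.trace (Mᵀ * M) := by
  simp [frobSq, Matrix.trace, Matrix.diag, Matrix.mul_apply, sq]
  exact Finset.sum_comm

lemma frobSq_conj' {d : ℕ} (U V A : Matrix (Fin d) (Fin d) ℝ)
    (hU' : Uᵀ * U = 1) (hV' : Vᵀ * V = 1) :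
    frobSq (U * A * Vᵀ) = frobSq A := by
  rw [frobSq_def', frobSq_def']
  have h1 : (U * A * Vᵀ)ᵀ * (U * A * Vᵀ) = V * (Aᵀ * A) * Vᵀ := by
    simp only [Matrix.transpose_mul, Matrix.transpose_transpose, Matrix.mul_assoc]
    rw [← Matrix.mul_assoc Uᵀ U, hU', Matrix.one_mul]
  rw [h1, Matrix.trace_mul_cycle, ← Matrix.mul_assoc, hV', Matrix.one_mul]

lemma frobSq_diag' {d : ℕ} (f : Fin d → ℝ) :
    frobSq (Matrix.diagonal f) = ∑ i, f i ^ 2 := by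
  simp [frobSq, Matrix.diagonal_apply, apply_ite (·^2)]

/-- progressive sensitivity: if each `θⁿ_init` (resp. `θⁿ_fin`) has
pre-training loss close to the stage-`n` checkpoint (resp. the regularized fine-tuning
limit `M_n^λ`), then the sensitivity `Δ_n = L_pre(θⁿ_fin) − L_pre(θⁿ_init)` increases
strictly in `n`, with gap at least `(σ_n − σ^ft_n)²/(1+λ)² − (3/5)m > 0`. -/
theorem progressive_sensitivity {d : ℕ} (hd : 1 ≤ d)
    (U V : Matrix (Fin d) (Fin d) ℝ)
    (hU : U * Uᵀ = 1) (hU' : Uᵀ * U = 1) (hV : V * Vᵀ = 1) (hV' : Vᵀ * V = 1)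
    (σ : Fin d → ℝ) (hσpos : ∀ i, 0 < σ i) (hσanti : StrictAnti σ)
    (σft : Fin d → ℝ) (hσftpos : ∀ i, 0 < σft i)
    (Apre : Matrix (Fin d) (Fin d) ℝ) (hApre : Apre = U * Matrix.diagonal σ * Vᵀ)
    (lam lam₀ : ℝ) (hlam : 0 ≤ lam) (hlam₀ : lam ≤ lam₀)
    (hne : ∀ i : Fin d, σft i ≠ σ i)
    (m : ℝ)
    (hm : m = sInf {x : ℝ | ∃ i : Fin d, x = (σ i - σft i) ^ 2} / (lam₀ + 1) ^ 2)
    (θinit θfin : ℕ → Matrix (Fin d) (Fin d) ℝ)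
    (hinit : ∀ n ≤ d,
      |frobSq (θinit n - Apre) - frobSq (U * truncDiag σ n * Vᵀ - Apre)| ≤ m / 10)
    (hfin : ∀ n ≤ d,
      |frobSq (θfin n - Apre) - frobSq (U * Mreg σ σft lam n * Vᵀ - Apre)| ≤ m / 5) :
    ∀ (n : ℕ) (_ : 1 ≤ n) (_ : n ≤ d),
      (frobSq (θfin n - Apre) - frobSq (θinit n - Apre))
          - (frobSq (θfin (n - 1) - Apre) - frobSq (θinit (n - 1) - Apre))
        ≥ (σ ⟨n - 1, by omega⟩ - σft ⟨n - 1, by omega⟩) ^ 2 / (1 + lam) ^ 2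
          - (3 / 5) * m ∧
      (σ ⟨n - 1, by omega⟩ - σft ⟨n - 1, by omega⟩) ^ 2 / (1 + lam) ^ 2
          - (3 / 5) * m > 0 ∧
      frobSq (θfin (n - 1) - Apre) - frobSq (θinit (n - 1) - Apre)
        < frobSq (θfin n - Apre) - frobSq (θinit n - Apre) := by
  have hlam1 : (0:ℝ) < 1 + lam := by linarith
  have hlam1' : (1 + lam) ≠ 0 := ne_of_gt hlam1
  have hlam₀1 : (0:ℝ) < lam₀ + 1 := by linarith
  set S : Set ℝ := {x : ℝ | ∃ i : Fin d, x = (σ i - σft i) ^ 2} with hS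
  have hSne : S.Nonempty := ⟨(σ ⟨0, hd⟩ - σft ⟨0, hd⟩)^2, ⟨0, hd⟩, rfl⟩
  have hSfin : S.Finite := by
    have : S = Set.range (fun i : Fin d => (σ i - σft i)^2) := by
      ext x; simp [hS, eq_comm]
    rw [this]; exact Set.finite_range _
  have hSmem : sInf S ∈ S := hSne.csInf_mem hSfin
  have hSpos : 0 < sInf S := by
    obtain ⟨i, hi⟩ := hSmem
    rw [hi]
    have : σ i - σft i ≠ 0 := sub_ne_zero.mpr (Ne.symm (hne i))
    positivity
  have hmpos : 0 < m := by rw [hm]; positivity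
  have hSle : ∀ i : Fin d, sInf S ≤ (σ i - σft i)^2 :=
    fun i => csInf_le hSfin.bddBelow ⟨i, rfl⟩
  -- m ≤ (σ k - σft k)^2 / (1+lam)^2 for every k
  have hkey : ∀ k : Fin d, m ≤ (σ k - σft k)^2 / (1 + lam)^2 := by
    intro k
    rw [hm]
    apply div_le_div₀ (by positivity) (hSle k) (by positivity)
    have : 1 + lam ≤ lam₀ + 1 := by linarith
    nlinarith [hlam1]
  -- exact loss formulas
  have Einit : ∀ n : ℕ, frobSq (U * truncDiag σ n * Vᵀ - Apre)
      = ∑ i : Fin d, (if (i:ℕ) < n then 0 else σ i ^ 2) := by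
    intro n
    rw [hApre, ← Matrix.sub_mul, ← Matrix.mul_sub, truncDiag, Matrix.diagonal_sub,
      frobSq_conj' U V _ hU' hV', frobSq_diag']
    refine Finset.sum_congr rfl fun i _ => ?_
    by_cases h : (i:ℕ) < n <;> simp [h]
  have Efin : ∀ n : ℕ, frobSq (U * Mreg σ σft lam n * Vᵀ - Apre)
      = ∑ i : Fin d, (if (i:ℕ) < n then (σ i - σft i)^2 / (1 + lam)^2 else σ i ^ 2) := by
    intro n
    rw [hApre, ← Matrix.sub_mul, ← Matrix.mul_sub, Mreg, Matrix.diagonal_sub,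
      frobSq_conj' U V _ hU' hV', frobSq_diag']
    refine Finset.sum_congr rfl fun i _ => ?_
    by_cases h : (i:ℕ) < n
    · simp only [h, if_true]
      field_simp
      ring
    · simp [h]
  -- exact sensitivity
  have hΔ : ∀ n : ℕ,
      frobSq (U * Mreg σ σft lam n * Vᵀ - Apre) - frobSq (U * truncDiag σ n * Vᵀ - Apre)
      = ∑ i : Fin d, (if (i:ℕ) < n then (σ i - σft i)^2 / (1 + lam)^2 else 0) := by
    intro n
    rw [Efin n, Einit n, ← Finset.sum_sub_distrib]
    refine Finset.sum_congr rfl fun i _ => ?_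
    by_cases h : (i:ℕ) < n <;> simp [h]
  intro n hn1 hnd
  have hn1d : n - 1 < d := by omega
  set k : Fin d := ⟨n - 1, hn1d⟩ with hk
  -- telescoping: gap of exact sensitivities equals the single term at k
  have hgap :
      (∑ i : Fin d, (if (i:ℕ) < n then (σ i - σft i)^2 / (1 + lam)^2 else 0))
      - (∑ i : Fin d, (if (i:ℕ) < n - 1 then (σ i - σft i)^2 / (1 + lam)^2 else 0))
      = (σ k - σft k)^2 / (1 + lam)^2 := by
    rw [← Finset.sum_sub_distrib]
    have : ∀ i : Fin d,
        (if (i:ℕ) < n then (σ i - σft i)^2 / (1 + lam)^2 else 0)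
        - (if (i:ℕ) < n - 1 then (σ i - σft i)^2 / (1 + lam)^2 else 0)
        = if i = k then (σ i - σft i)^2 / (1 + lam)^2 else 0 := by
      intro i
      have hik : i = k ↔ (i:ℕ) = n - 1 := by
        rw [Fin.ext_iff]
      by_cases h1 : (i:ℕ) < n - 1
      · have h2 : (i:ℕ) < n := by omega
        have h3 : ¬ i = k := by rw [hik]; omega
        rw [if_pos h2, if_pos h1, if_neg h3]; ring
      · by_cases h2 : (i:ℕ) < n
        · have h3 : i = k := by rw [hik]; omega
          rw [if_pos h2, if_neg h1, if_pos h3]; ring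
        · have h3 : ¬ i = k := by rw [hik]; omega
          rw [if_neg h2, if_neg h1, if_neg h3]; ring
    rw [Finset.sum_congr rfl fun i _ => this i]
    simp
  -- error bounds
  have hIb := hinit n hnd
  have hFb := hfin n hnd
  have hIb' := hinit (n-1) (by omega)
  have hFb' := hfin (n-1) (by omega)
  rw [abs_le] at hIb hFb hIb' hFb'
  have hmain :
      (frobSq (θfin n - Apre) - frobSq (θinit n - Apre))
        - (frobSq (θfin (n - 1) - Apre) - frobSq (θinit (n - 1) - Apre))
      ≥ (σ k - σft k)^2 / (1 + lam)^2 - (3/5) * m := by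
    have e1 := hΔ n
    have e2 := hΔ (n-1)
    have := hgap
    linarith [hIb.1, hIb.2, hFb.1, hFb.2, hIb'.1, hIb'.2, hFb'.1, hFb'.2]
  have hpos : (σ k - σft k)^2 / (1 + lam)^2 - (3/5) * m > 0 := by
    have := hkey k
    linarith
  exact ⟨hmain, hpos, by linarith⟩
end
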